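/- For the quasi-Kähler Lie group example, the nonzero components of the Weyl tensor W̃ of g̃ are determined by W̃₁₂₂₁ = −W̃₁₄₄₁ = −W̃₂₃₃₂ = W̃₃₄₄₃ = 3W̃₁₂₃₄ = 3W̃₁₄₃₂ = −(3/2)W̃₁₃₃₁ = −(3/2)W̃₂₄₄₂ = λ₁λ₃ + λ₂λ₄. -/

import Mathlib

noncomputable section

/-- The standard basis of `ℝ⁴` (denoted `X₁,…,X₄` in the paper). -/
def e (i : Fin 4) : Fin 4 → ℝ := Pi.single i 1

/-- The almost complex structure: `J X₁ = X₃, J X₂ = X₄, J X₃ = −X₁, J X₄ = −X₂`. -/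
def Jm (x : Fin 4 → ℝ) : Fin 4 → ℝ := ![-(x 2), -(x 3), x 0, x 1]

/-- The Norden metric `g = diag(1,1,−1,−1)`. -/
def gm (x y : Fin 4 → ℝ) : ℝ := x 0 * y 0 + x 1 * y 1 - x 2 * y 2 - x 3 * y 3

/-- The associated Norden metric `g̃(x,y) = g(x,Jy)`. -/
def gt (x y : Fin 4 → ℝ) : ℝ := gm x (Jm y)

/-- The bracket of the 4-parametric family of Lie algebras:
`[X₁,X₃]=λ₂X₂+λ₄X₄`, `[X₂,X₄]=λ₁X₁+λ₃X₃`, `[X₂,X₃]=−λ₂X₁−λ₃X₄`,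
`[X₃,X₄]=−λ₄X₁+λ₃X₂`, `[X₄,X₁]=λ₁X₂+λ₄X₃`, `[X₂,X₁]=−λ₂X₃+λ₁X₄`,
extended bilinearly and skew-symmetrically (here with 0-based indices). -/
def br (l1 l2 l3 l4 : ℝ) (x y : Fin 4 → ℝ) : Fin 4 → ℝ :=
  ![ -l2*(x 1*y 2 - x 2*y 1) + l1*(x 1*y 3 - x 3*y 1) - l4*(x 2*y 3 - x 3*y 2),
      l2*(x 0*y 2 - x 2*y 0) - l1*(x 0*y 3 - x 3*y 0) + l3*(x 2*y 3 - x 3*y 2),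
      l2*(x 0*y 1 - x 1*y 0) - l4*(x 0*y 3 - x 3*y 0) + l3*(x 1*y 3 - x 3*y 1),
     -l1*(x 0*y 1 - x 1*y 0) + l4*(x 0*y 2 - x 2*y 0) - l3*(x 1*y 2 - x 2*y 1) ]

/-- The Levi-Civita connection of `g`: `∇_x y = ½[x,y]`. -/
def nab (l1 l2 l3 l4 : ℝ) (x y : Fin 4 → ℝ) : Fin 4 → ℝ :=
  ((1 : ℝ)/2) • br l1 l2 l3 l4 x y

/-- The matrix of `g` in the standard basis. -/
def G : Matrix (Fin 4) (Fin 4) ℝ := fun i j => gm (e i) (e j)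

/-- The matrix of `g̃` in the standard basis. -/
def Gt : Matrix (Fin 4) (Fin 4) ℝ := fun i j => gt (e i) (e j)

/-! The Koszul formula expresses `g̃(∇̃_x y, z)` through `g̃` and the bracket alone, so by
nondegeneracy of `g̃` the connection `∇̃` is given by an explicit formula. The rest is
computation: the Ricci tensor is the bilinear form of `ricciMatrix`, the scalar curvature is
`−5(λ₁λ₃ + λ₂λ₄)`, and the Weyl components follow. -/

theorem koszul_formula {V : Type*} [AddGroup V] (g : V → V → ℝ)
    (hg_comm : ∀ x y, g x y = g y x) (hg_sub : ∀ x y z, g (x - y) z = g x z - g y z)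
    (D b : V → V → V) (htor : ∀ x y, D x y - D y x = b x y)
    (hmet : ∀ x y z, g (D x y) z + g y (D x z) = 0) (x y z : V) :
    2 * g (D x y) z = g (b x y) z - g (b y z) x + g (b z x) y := by
  have skew : ∀ a c d, g (D a c) d = -g (D a d) c := fun a c d => by
    linarith [hmet a c d, hg_comm c (D a d)]
  have tor : ∀ a c d, g (b a c) d = g (D a c) d - g (D c a) d := fun a c d => by
    rw [← htor, hg_sub]
  rw [tor x y z, tor y z x, tor z x y, skew y x z, skew z y x, skew x z y]
  ring

lemma e_zero : e 0 = ![1, 0, 0, 0] := by funext i; fin_cases i <;> simp [e]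
lemma e_one : e 1 = ![0, 1, 0, 0] := by funext i; fin_cases i <;> simp [e]
lemma e_two : e 2 = ![0, 0, 1, 0] := by funext i; fin_cases i <;> simp [e]
lemma e_three : e 3 = ![0, 0, 0, 1] := by funext i; fin_cases i <;> simp [e]

lemma gt_comm (x y : Fin 4 → ℝ) : gt x y = gt y x := by
  simp only [gt, gm, Jm, Fin.isValue, Matrix.cons_val_zero, Matrix.cons_val_one, Matrix.cons_val]
  ring

lemma gt_sub_left (x y z : Fin 4 → ℝ) : gt (x - y) z = gt x z - gt y z := by
  simp only [gt, gm, Jm, Fin.isValue, Matrix.cons_val_zero, Matrix.cons_val_one, Matrix.cons_val,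
    Pi.sub_apply]
  ring

lemma eq_of_forall_gt_eq {v w : Fin 4 → ℝ} (h : ∀ z, gt v z = gt w z) : v = w := by
  have h0 := h (e 0); have h1 := h (e 1); have h2 := h (e 2); have h3 := h (e 3)
  simp only [gt, gm, Jm, Fin.isValue, Matrix.cons_val_zero, Matrix.cons_val_one, Matrix.cons_val,
    e_zero, e_one, e_two, e_three] at h0 h1 h2 h3
  funext i; fin_cases i <;> simp only [Fin.zero_eta, Fin.mk_one, Fin.reduceFinMk] <;> linarith

lemma Gt_inv : Gt⁻¹ = Gt := by
  refine Matrix.inv_eq_right_inv ?_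
  ext i j
  fin_cases i <;> fin_cases j <;> simp [Gt, gt, gm, Jm, e, Pi.single_apply, Matrix.mul_apply]

section
variable (l1 l2 l3 l4 : ℝ)

/-- The paper writes `½{[x,y] + J[x,Jy] − J[Jx,y]}`; for the `Jm` and `br` used here it is the
opposite signs of the `J`-terms that satisfy the Koszul formula. -/
def nabt (x y : Fin 4 → ℝ) : Fin 4 → ℝ :=
  ((1 : ℝ)/2) •
    (br l1 l2 l3 l4 x y + Jm (br l1 l2 l3 l4 (Jm x) y) - Jm (br l1 l2 l3 l4 x (Jm y)))

lemma two_mul_gt_nabt (x y z : Fin 4 → ℝ) :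
    2 * gt (nabt l1 l2 l3 l4 x y) z
      = gt (br l1 l2 l3 l4 x y) z - gt (br l1 l2 l3 l4 y z) x + gt (br l1 l2 l3 l4 z x) y := by
  simp only [nabt, br, gt, gm, Jm, Fin.isValue, Matrix.cons_val_zero, Matrix.cons_val_one,
    Matrix.cons_val, Pi.add_apply, Pi.sub_apply, Pi.smul_apply, smul_eq_mul]
  ring

theorem eq_nabt_of_torsion_of_metric (D : (Fin 4 → ℝ) → (Fin 4 → ℝ) → (Fin 4 → ℝ))
    (htor : ∀ x y, D x y - D y x = br l1 l2 l3 l4 x y)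
    (hmet : ∀ x y z, gt (D x y) z + gt y (D x z) = 0) : D = nabt l1 l2 l3 l4 := by
  funext x y
  refine eq_of_forall_gt_eq fun z => ?_
  linarith [koszul_formula gt gt_comm gt_sub_left D _ htor hmet x y z,
    two_mul_gt_nabt l1 l2 l3 l4 x y z]

def curvt (x y z u : Fin 4 → ℝ) : ℝ :=
  gt (nabt l1 l2 l3 l4 x (nabt l1 l2 l3 l4 y z) - nabt l1 l2 l3 l4 y (nabt l1 l2 l3 l4 x z)
    - nabt l1 l2 l3 l4 (br l1 l2 l3 l4 x y) z) u

def ricci (y z : Fin 4 → ℝ) : ℝ :=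
  ∑ i, ∑ j, Gt i j * curvt l1 l2 l3 l4 (e i) y z (e j)

def scal : ℝ := ∑ i, ∑ j, Gt i j * ricci l1 l2 l3 l4 (e i) (e j)

def ricciMatrix : Matrix (Fin 4) (Fin 4) ℝ :=
  !![l4^2 - l3^2/2 - l2^2 - 2*l1^2, -3/2*l3*l4 - l1*l2, l2*l4 + 3/2*l1*l3, 3/2*l2*l3 - l1*l4;
    -3/2*l3*l4 - l1*l2, -l4^2/2 + l3^2 - 2*l2^2 - l1^2, -l2*l3 + 3/2*l1*l4, 3/2*l2*l4 + l1*l3;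
    l2*l4 + 3/2*l1*l3, -l2*l3 + 3/2*l1*l4, -l4^2 - 2*l3^2 + l2^2 - l1^2/2, -l3*l4 - 3/2*l1*l2;
    3/2*l2*l3 - l1*l4, 3/2*l2*l4 + l1*l3, -l3*l4 - 3/2*l1*l2, -2*l4^2 - l3^2 - l2^2/2 + l1^2]

lemma ricci_eq_neg_sum_curvt (y z : Fin 4 → ℝ) : ricci l1 l2 l3 l4 y z =
    -(curvt l1 l2 l3 l4 (e 0) y z (e 2) + curvt l1 l2 l3 l4 (e 1) y z (e 3)
      + curvt l1 l2 l3 l4 (e 2) y z (e 0) + curvt l1 l2 l3 l4 (e 3) y z (e 1)) := by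
  simp only [ricci, Fin.sum_univ_four, Gt, gt, gm, Jm, Fin.isValue, Matrix.cons_val_zero,
    Matrix.cons_val_one, Matrix.cons_val, e_zero, e_one, e_two, e_three]
  ring

open Matrix in
lemma ricci_apply (y z : Fin 4 → ℝ) :
    ricci l1 l2 l3 l4 y z = y ⬝ᵥ (ricciMatrix l1 l2 l3 l4 *ᵥ z) := by
  rw [ricci_eq_neg_sum_curvt]
  simp only [curvt, nabt, br, gt, gm, Jm, ricciMatrix, dotProduct, mulVec, Fin.sum_univ_four,
    of_apply, cons_val', cons_val_fin_one, Fin.isValue, cons_val_zero, cons_val_one, cons_val,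
    Pi.add_apply, Pi.sub_apply, Pi.smul_apply, smul_eq_mul, e_zero, e_one, e_two, e_three]
  ring

lemma ricci_basis (i j : Fin 4) :
    ricci l1 l2 l3 l4 (e i) (e j) = ricciMatrix l1 l2 l3 l4 i j := by
  simp [ricci_apply, e]

lemma scal_eq : scal l1 l2 l3 l4 = -5 * (l1 * l3 + l2 * l4) := by
  simp only [scal, ricci_basis, Fin.sum_univ_four, Gt, gt, gm, Jm, ricciMatrix,
    Matrix.of_apply, Matrix.cons_val', Matrix.cons_val_fin_one, Fin.isValue,
    Matrix.cons_val_zero, Matrix.cons_val_one, Matrix.cons_val, e_zero, e_one, e_two, e_three]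
  ring

end

/-- The constants `1/2 = 1/(n−2)` and `1/3 = 1/(n−1)` are those of dimension `n = 4`. -/
def weylTensor {V : Type*} (g : V → V → ℝ) (R : V → V → V → V → ℝ) (ρ : V → V → ℝ) (τ : ℝ)
    (x y z u : V) : ℝ :=
  R x y z u - (1/2) * ((g y z * ρ x u - g x z * ρ y u + ρ y z * g x u - ρ x z * g y u)
    - (τ/3) * (g y z * g x u - g x z * g y u))

theorem weylTensor_components (l1 l2 l3 l4 : ℝ) :
    let W := weylTensor gt (curvt l1 l2 l3 l4) (ricci l1 l2 l3 l4) (scal l1 l2 l3 l4)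
    W (e 0) (e 1) (e 1) (e 0) = l1*l3 + l2*l4 ∧
    -W (e 0) (e 3) (e 3) (e 0) = l1*l3 + l2*l4 ∧
    -W (e 1) (e 2) (e 2) (e 1) = l1*l3 + l2*l4 ∧
    W (e 2) (e 3) (e 3) (e 2) = l1*l3 + l2*l4 ∧
    3 * W (e 0) (e 1) (e 2) (e 3) = l1*l3 + l2*l4 ∧
    3 * W (e 0) (e 3) (e 2) (e 1) = l1*l3 + l2*l4 ∧
    -(3/2) * W (e 0) (e 2) (e 2) (e 0) = l1*l3 + l2*l4 ∧
    -(3/2) * W (e 1) (e 3) (e 3) (e 1) = l1*l3 + l2*l4 := by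
  intro W
  refine ⟨?_, ?_, ?_, ?_, ?_, ?_, ?_, ?_⟩ <;>
  · simp only [W, weylTensor, ricci_basis, scal_eq]
    simp only [curvt, nabt, br, gt, gm, Jm, ricciMatrix, Matrix.of_apply, Matrix.cons_val',
      Matrix.cons_val_fin_one, Fin.isValue, Matrix.cons_val_zero, Matrix.cons_val_one,
      Matrix.cons_val, Pi.add_apply, Pi.sub_apply, Pi.smul_apply, smul_eq_mul,
      e_zero, e_one, e_two, e_three]
    ring

theorem stmt_18_general (l1 l2 l3 l4 : ℝ)
    -- `nt` is the Levi-Civita connection `∇̃` of the (left-invariant) metric `g̃`: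
    -- the unique bilinear, torsion-free, `g̃`-compatible connection on the Lie algebra
    (nt : (Fin 4 → ℝ) → (Fin 4 → ℝ) → (Fin 4 → ℝ))
    (hnt_tor : ∀ x y, nt x y - nt y x = br l1 l2 l3 l4 x y)
    (hnt_met : ∀ x y z, gt (nt x y) z + gt y (nt x z) = 0)
    -- the (0,4)-curvature tensor `R̃(x,y,z,u) = g̃(R̃(x,y)z, u)` of `∇̃`
    (Rt : (Fin 4 → ℝ) → (Fin 4 → ℝ) → (Fin 4 → ℝ) → (Fin 4 → ℝ) → ℝ)
    (hRt : ∀ x y z u, Rt x y z u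
      = gt (nt x (nt y z) - nt y (nt x z) - nt (br l1 l2 l3 l4 x y) z) u)
    -- the Ricci tensor `ρ̃(y,z) = g̃ⁱʲ R̃(eᵢ,y,z,eⱼ)` and scalar curvature `τ̃ = g̃ⁱʲ ρ̃(eᵢ,eⱼ)`
    (rho : (Fin 4 → ℝ) → (Fin 4 → ℝ) → ℝ)
    (hrho : ∀ y z, rho y z = ∑ i, ∑ j, Gt⁻¹ i j * Rt (e i) y z (e j))
    (tau : ℝ) (htau : tau = ∑ i, ∑ j, Gt⁻¹ i j * rho (e i) (e j))
    -- the Weyl tensor `W̃ = R̃ − (1/(2n−2))(ψ₁(ρ̃) − (τ̃/(2n−1))π₁)` in dimension `2n = 4`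
    (W : (Fin 4 → ℝ) → (Fin 4 → ℝ) → (Fin 4 → ℝ) → (Fin 4 → ℝ) → ℝ)
    (hW : ∀ x y z u, W x y z u
      = Rt x y z u
        - (1/2) * ((gt y z * rho x u - gt x z * rho y u
                      + rho y z * gt x u - rho x z * gt y u)
                    - (tau/3) * (gt y z * gt x u - gt x z * gt y u)))
    :
    W (e 0) (e 1) (e 1) (e 0) = l1*l3 + l2*l4 ∧
    -W (e 0) (e 3) (e 3) (e 0) = l1*l3 + l2*l4 ∧
    -W (e 1) (e 2) (e 2) (e 1) = l1*l3 + l2*l4 ∧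
    W (e 2) (e 3) (e 3) (e 2) = l1*l3 + l2*l4 ∧
    3 * W (e 0) (e 1) (e 2) (e 3) = l1*l3 + l2*l4 ∧
    3 * W (e 0) (e 3) (e 2) (e 1) = l1*l3 + l2*l4 ∧
    -(3/2) * W (e 0) (e 2) (e 2) (e 0) = l1*l3 + l2*l4 ∧
    -(3/2) * W (e 1) (e 3) (e 3) (e 1) = l1*l3 + l2*l4 := by
  obtain rfl : nt = nabt l1 l2 l3 l4 :=
    eq_nabt_of_torsion_of_metric l1 l2 l3 l4 nt hnt_tor hnt_met
  obtain rfl : Rt = curvt l1 l2 l3 l4 := by funext x y z u; exact hRt x y z u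
  obtain rfl : rho = ricci l1 l2 l3 l4 := by funext y z; rw [hrho, Gt_inv]; rfl
  obtain rfl : tau = scal l1 l2 l3 l4 := by rw [htau, Gt_inv]; rfl
  obtain rfl : W = weylTensor gt (curvt l1 l2 l3 l4) (ricci l1 l2 l3 l4) (scal l1 l2 l3 l4) := by
    funext x y z u; exact hW x y z u
  exact weylTensor_components l1 l2 l3 l4

/-- The nonzero components of the Weyl tensor `W̃` of `g̃` are determined by
`W̃₁₂₂₁ = −W̃₁₄₄₁ = −W̃₂₃₃₂ = W̃₃₄₄₃ = 3W̃₁₂₃₄ = 3W̃₁₄₃₂ = −(3/2)W̃₁₃₃₁ = −(3/2)W̃₂₄₄₂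
 = λ₁λ₃ + λ₂λ₄`. -/
theorem stmt_18 (l1 l2 l3 l4 : ℝ)
    -- `nt` is the Levi-Civita connection `∇̃` of the (left-invariant) metric `g̃`:
    -- the unique bilinear, torsion-free, `g̃`-compatible connection on the Lie algebra
    (nt : (Fin 4 → ℝ) → (Fin 4 → ℝ) → (Fin 4 → ℝ))
    (hnt_addl : ∀ x y z, nt (x + y) z = nt x z + nt y z)
    (hnt_smull : ∀ (c : ℝ) x z, nt (c • x) z = c • nt x z)
    (hnt_addr : ∀ x y z, nt x (y + z) = nt x y + nt x z)
    (hnt_smulr : ∀ (c : ℝ) x y, nt x (c • y) = c • nt x y)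
    (hnt_tor : ∀ x y, nt x y - nt y x = br l1 l2 l3 l4 x y)
    (hnt_met : ∀ x y z, gt (nt x y) z + gt y (nt x z) = 0)
    -- the (0,4)-curvature tensor `R̃(x,y,z,u) = g̃(R̃(x,y)z, u)` of `∇̃`
    (Rt : (Fin 4 → ℝ) → (Fin 4 → ℝ) → (Fin 4 → ℝ) → (Fin 4 → ℝ) → ℝ)
    (hRt : ∀ x y z u, Rt x y z u
      = gt (nt x (nt y z) - nt y (nt x z) - nt (br l1 l2 l3 l4 x y) z) u)
    -- the Ricci tensor `ρ̃(y,z) = g̃ⁱʲ R̃(eᵢ,y,z,eⱼ)` and scalar curvature `τ̃ = g̃ⁱʲ ρ̃(eᵢ,eⱼ)`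
    (rho : (Fin 4 → ℝ) → (Fin 4 → ℝ) → ℝ)
    (hrho : ∀ y z, rho y z = ∑ i, ∑ j, Gt⁻¹ i j * Rt (e i) y z (e j))
    (tau : ℝ) (htau : tau = ∑ i, ∑ j, Gt⁻¹ i j * rho (e i) (e j))
    -- the Weyl tensor `W̃ = R̃ − (1/(2n−2))(ψ₁(ρ̃) − (τ̃/(2n−1))π₁)` in dimension `2n = 4`
    (W : (Fin 4 → ℝ) → (Fin 4 → ℝ) → (Fin 4 → ℝ) → (Fin 4 → ℝ) → ℝ)
    (hW : ∀ x y z u, W x y z u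
      = Rt x y z u
        - (1/2) * ((gt y z * rho x u - gt x z * rho y u
                      + rho y z * gt x u - rho x z * gt y u)
                    - (tau/3) * (gt y z * gt x u - gt x z * gt y u)))
    :
    W (e 0) (e 1) (e 1) (e 0) = l1*l3 + l2*l4 ∧
    -W (e 0) (e 3) (e 3) (e 0) = l1*l3 + l2*l4 ∧
    -W (e 1) (e 2) (e 2) (e 1) = l1*l3 + l2*l4 ∧
    W (e 2) (e 3) (e 3) (e 2) = l1*l3 + l2*l4 ∧
    3 * W (e 0) (e 1) (e 2) (e 3) = l1*l3 + l2*l4 ∧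
    3 * W (e 0) (e 3) (e 2) (e 1) = l1*l3 + l2*l4 ∧
    -(3/2) * W (e 0) (e 2) (e 2) (e 0) = l1*l3 + l2*l4 ∧
    -(3/2) * W (e 1) (e 3) (e 3) (e 1) = l1*l3 + l2*l4 :=
  stmt_18_general l1 l2 l3 l4 nt hnt_tor hnt_met Rt hRt rho hrho tau htau W hW

end
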